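/- In the block construction, the total size of F is |F| = Σ_{j=1}^{m} C(m, j) · 2^{(m−j)s} = 2^{(m−1)s} · Σ_{j=1}^{m} C(m, j) · 2^{−(j−1)s}. -/

import Mathlib

/-!
A member of the block family is determined by the pair `(S, X)` with `S` nonempty and
`X ⊆ ⋃_{i ∉ S} T i`, via `(S, X) ↦ (⋃_{i ∈ S} B i) ∪ X`: `S` is recovered as the set of blocks
the member contains, since each `B i` has a point outside `T i` and `X` only meets the other
blocks. Hence `|F| = Σ_{S ≠ ∅} 2^{(m - |S|) s}`, and grouping the `S` by size gives the formula.
-/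

open Finset

/-- A family of finite sets is union-closed if it contains the union of any two of
its members. -/
def UnionClosed {α : Type*} [DecidableEq α] (F : Finset (Finset α)) : Prop :=
  ∀ A ∈ F, ∀ B ∈ F, A ∪ B ∈ F

/-- The abundance of `x` with respect to a family `F`. -/
noncomputable def abundance {α : Type*} [DecidableEq α] (F : Finset (Finset α)) (x : α) : ℝ :=
  ((F.filter (fun A => x ∈ A)).card : ℝ) / (F.card : ℝ)

/-- The average overlap density of `F`. -/
noncomputable def AOD {α : Type*} [DecidableEq α] (F : Finset (Finset α)) : ℝ :=
  (1 / (((F.erase ∅).card : ℝ))) *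
    ∑ A ∈ F.erase ∅, (1 / (A.card : ℝ)) * ∑ x ∈ A, abundance F x

/-- The union-closed family generated by `G = {B i ∪ {j} : i, j ∈ T}`:
all unions of nonempty subcollections of `G`. -/
def blockFamily {n m : ℕ} (B : Fin m → Finset (Fin n)) (T : Finset (Fin n)) :
    Finset (Finset (Fin n)) :=
  ((((univ : Finset (Fin m)) ×ˢ T).image (fun p => B p.1 ∪ {p.2})).powerset.filter
      (fun C => C.Nonempty)).image (fun C => C.sup id)

namespace Finset

open Function

variable {α ι : Type*} [DecidableEq α]

theorem mem_image_sup_of_nonempty_subset_iff {G : Finset (Finset α)} {A : Finset α} :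
    A ∈ (G.powerset.filter fun C => C.Nonempty).image (fun C => C.sup id) ↔
      (∃ g ∈ G, g ⊆ A) ∧ ∀ x ∈ A, ∃ g ∈ G, g ⊆ A ∧ x ∈ g := by
  simp only [mem_image, mem_filter, mem_powerset]
  constructor
  · rintro ⟨C, ⟨hCG, g, hg⟩, rfl⟩
    refine ⟨⟨g, hCG hg, le_sup (f := id) hg⟩, fun x hx => ?_⟩
    obtain ⟨g', hg', hxg'⟩ := mem_sup.mp hx
    exact ⟨g', hCG hg', le_sup (f := id) hg', hxg'⟩
  · rintro ⟨⟨g, hg, hgA⟩, hcover⟩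
    refine ⟨G.filter (· ⊆ A), ⟨filter_subset _ _, g, mem_filter.mpr ⟨hg, hgA⟩⟩, ?_⟩
    refine le_antisymm (Finset.sup_le fun g' hg' => (mem_filter.mp hg').2) fun x hx => ?_
    obtain ⟨g', hg', hg'A, hxg'⟩ := hcover x hx
    exact mem_sup.mpr ⟨g', mem_filter.mpr ⟨hg', hg'A⟩, hxg'⟩

theorem sum_powerset_filter_nonempty_apply_card {M : Type*} [AddCommMonoid M] (f : ℕ → M)
    (x : Finset ι) :
    ∑ S ∈ x.powerset.filter (fun S => S.Nonempty), f S.card =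
      ∑ j ∈ Icc 1 x.card, x.card.choose j • f j := by
  let g : ℕ → M := fun j => if j = 0 then 0 else f j
  calc ∑ S ∈ x.powerset.filter (fun S => S.Nonempty), f S.card
      = ∑ S ∈ x.powerset, g S.card := by
        rw [sum_filter]
        refine sum_congr rfl fun S _ => ?_
        rcases S.eq_empty_or_nonempty with rfl | hS
        · simp [g]
        · simp [g, hS, hS.ne_empty]
    _ = ∑ j ∈ range (x.card + 1), x.card.choose j • g j := sum_powerset_apply_card g
    _ = ∑ j ∈ Icc 1 x.card, x.card.choose j • f j := by
        rw [range_eq_Ico, sum_eq_sum_Ico_succ_bot (by omega), zero_add, Ico_add_one_right_eq_Icc]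
        simp only [g, if_true, smul_zero, zero_add]
        exact sum_congr rfl fun j hj => by
          rw [if_neg (Nat.one_le_iff_ne_zero.mp (mem_Icc.mp hj).1)]

variable [Fintype ι] [DecidableEq ι] {B T : ι → Finset α}

theorem disjoint_biUnion_compl_biUnion (hB : Pairwise (Disjoint on B)) (hTB : ∀ i, T i ⊆ B i)
    (S : Finset ι) : Disjoint (S.biUnion B) (Sᶜ.biUnion T) :=
  (disjoint_biUnion_left _ _ _).2 fun i hi => (disjoint_biUnion_right _ _ _).2 fun j hj =>
    (hB (i := i) (j := j) fun hij => mem_compl.mp hj (hij ▸ hi)).mono_right (hTB j)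

theorem mem_of_subset_biUnion_union (hB : Pairwise (Disjoint on B)) (hTB : ∀ i, T i ⊂ B i)
    {S : Finset ι} {X : Finset α} (hX : X ⊆ Sᶜ.biUnion T) {i : ι}
    (hi : B i ⊆ S.biUnion B ∪ X) : i ∈ S := by
  by_contra hiS
  obtain ⟨b, hbB, hbT⟩ := exists_of_ssubset (hTB i)
  rcases mem_union.mp (hi hbB) with hb | hb
  · obtain ⟨j, hj, hbj⟩ := mem_biUnion.mp hb
    exact disjoint_left.mp (hB (i := i) (j := j) fun hij => hiS (hij ▸ hj)) hbB hbj
  · obtain ⟨j, -, hbj⟩ := mem_biUnion.mp (hX hb)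
    exact disjoint_left.mp (hB (i := i) (j := j) fun hij => hbT (hij ▸ hbj)) hbB ((hTB j).1 hbj)

theorem injOn_biUnion_union (hB : Pairwise (Disjoint on B)) (hTB : ∀ i, T i ⊂ B i) :
    Set.InjOn (fun p : (_ : Finset ι) × Finset α => p.1.biUnion B ∪ p.2)
      {p | p.2 ⊆ p.1ᶜ.biUnion T} := by
  rintro ⟨S₁, X₁⟩ hX₁ ⟨S₂, X₂⟩ hX₂ hA
  simp only [Set.mem_ofPred_eq] at hX₁ hX₂ hA
  obtain rfl : S₁ = S₂ := by
    ext i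
    exact ⟨fun hi => mem_of_subset_biUnion_union hB hTB hX₂
        (hA ▸ (subset_biUnion_of_mem B hi).trans subset_union_left),
      fun hi => mem_of_subset_biUnion_union hB hTB hX₁
        (hA ▸ (subset_biUnion_of_mem B hi).trans subset_union_left)⟩
  have hdisj (X : Finset α) (hX : X ⊆ S₁ᶜ.biUnion T) : Disjoint (S₁.biUnion B) X :=
    (disjoint_biUnion_compl_biUnion hB (fun i => (hTB i).1) S₁).mono_right hX
  rw [← union_sdiff_cancel_left (hdisj X₁ hX₁), hA, union_sdiff_cancel_left (hdisj X₂ hX₂)]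

end Finset

section BlockFamily

open Function

variable {n m : ℕ} {B T : Fin m → Finset (Fin n)}

theorem mem_blockFamily_iff (hTB : ∀ i, T i ⊆ B i) (hTne : ∀ i, (T i).Nonempty)
    {A : Finset (Fin n)} :
    A ∈ blockFamily B (univ.biUnion T) ↔
      ∃ S : Finset (Fin m), S.Nonempty ∧ ∃ X ⊆ Sᶜ.biUnion T, S.biUnion B ∪ X = A := by
  simp only [blockFamily, mem_image_sup_of_nonempty_subset_iff, exists_mem_image, mem_product,
    mem_univ, true_and, union_subset_iff, singleton_subset_iff, mem_union, mem_singleton,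
    mem_biUnion, Prod.exists]
  constructor
  · rintro ⟨⟨i, -, -, hBi, -⟩, hcover⟩
    set S := univ.filter fun j => B j ⊆ A
    have hSA : S.biUnion B ⊆ A := biUnion_subset.2 fun j hj => (mem_filter.mp hj).2
    refine ⟨S, ⟨i, mem_filter.mpr ⟨mem_univ i, hBi⟩⟩, A \ S.biUnion B, fun x hx => ?_,
      union_sdiff_of_subset hSA⟩
    obtain ⟨hxA, hxS⟩ := mem_sdiff.mp hx
    obtain ⟨j, t, ⟨l, htl⟩, ⟨hBj, -⟩, hxj | rfl⟩ := hcover x hxA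
    · exact absurd (mem_biUnion.mpr ⟨j, mem_filter.mpr ⟨mem_univ j, hBj⟩, hxj⟩) hxS
    · exact mem_biUnion.mpr ⟨l, mem_compl.mpr fun hl => hxS (mem_biUnion.mpr ⟨l, hl, hTB l htl⟩),
        htl⟩
  · rintro ⟨S, ⟨i, hi⟩, X, hX, rfl⟩
    have hBS {j : Fin m} (hj : j ∈ S) : B j ⊆ S.biUnion B ∪ X :=
      (subset_biUnion_of_mem B hj).trans subset_union_left
    obtain ⟨t, ht⟩ := hTne i
    refine ⟨⟨i, t, ⟨i, ht⟩, ⟨hBS hi, hBS hi (hTB i ht)⟩⟩, fun x hx => ?_⟩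
    rcases mem_union.mp hx with hxS | hxX
    · obtain ⟨j, hj, hxj⟩ := mem_biUnion.mp hxS
      obtain ⟨u, hu⟩ := hTne j
      exact ⟨j, u, ⟨j, hu⟩, ⟨hBS hj, hBS hj (hTB j hu)⟩, Or.inl hxj⟩
    · obtain ⟨l, -, hxl⟩ := mem_biUnion.mp (hX hxX)
      exact ⟨i, x, ⟨l, hxl⟩, ⟨hBS hi, hx⟩, Or.inr rfl⟩

theorem blockFamily_eq_image (hTB : ∀ i, T i ⊆ B i) (hTne : ∀ i, (T i).Nonempty) :
    blockFamily B (univ.biUnion T) =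
      ((univ.powerset.filter fun S : Finset (Fin m) => S.Nonempty).sigma
        fun S => (Sᶜ.biUnion T).powerset).image fun p => p.1.biUnion B ∪ p.2 := by
  ext A
  simp [mem_blockFamily_iff hTB hTne, and_assoc]

theorem card_blockFamily (hB : Pairwise (Disjoint on B)) (hTB : ∀ i, T i ⊂ B i) {s : ℕ}
    (hs : 0 < s) (hTcard : ∀ i, (T i).card = s) :
    (blockFamily B (univ.biUnion T)).card =
      ∑ S ∈ univ.powerset.filter (fun S : Finset (Fin m) => S.Nonempty),
        2 ^ ((m - S.card) * s) := by
  have hTne (i : Fin m) : (T i).Nonempty := card_pos.mp (hTcard i ▸ hs)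
  have hTdisj : Pairwise (Disjoint on T) := fun i j hij => (hB hij).mono (hTB i).1 (hTB j).1
  rw [blockFamily_eq_image (fun i => (hTB i).1) hTne, card_image_of_injOn, card_sigma]
  · refine sum_congr rfl fun S _ => ?_
    rw [card_powerset, card_biUnion fun i _ j _ hij => hTdisj hij,
      sum_const_nat fun i _ => hTcard i, card_compl, Fintype.card_fin]
  · exact (injOn_biUnion_union hB hTB).mono fun p hp => mem_powerset.mp (mem_sigma.mp hp).2

end BlockFamily

theorem blockFamily_card_general
    (k m s : ℕ) (hs : 0 < s) (hsk : s + 2 ≤ k)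
    (B : Fin m → Finset (Fin (k * m)))
    (hBcard : ∀ i, (B i).card = k)
    (hBdisj : ∀ i j : Fin m, i ≠ j → Disjoint (B i) (B j))
    (T : Fin m → Finset (Fin (k * m)))
    (hT : ∀ i, T i ⊆ B i) (hTcard : ∀ i, (T i).card = s)
    :
    (blockFamily B ((univ : Finset (Fin m)).biUnion T)).card
        = ∑ j ∈ Finset.Icc 1 m, m.choose j * 2 ^ ((m - j) * s) ∧
      ((blockFamily B ((univ : Finset (Fin m)).biUnion T)).card : ℝ)
        = 2 ^ ((m - 1) * s) *
            ∑ j ∈ Finset.Icc 1 m, (m.choose j : ℝ) * (2 : ℝ) ^ (-(((j - 1) * s : ℕ) : ℤ)) := by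
  have hTB (i : Fin m) : T i ⊂ B i := (hT i).ssubset_of_ne fun h => by
    have := congrArg card h
    rw [hTcard, hBcard] at this
    omega
  have hcard : (blockFamily B (univ.biUnion T)).card =
      ∑ j ∈ Icc 1 m, m.choose j * 2 ^ ((m - j) * s) := by
    rw [card_blockFamily (fun i j hij => hBdisj i j hij) hTB hs hTcard,
      sum_powerset_filter_nonempty_apply_card (fun j => 2 ^ ((m - j) * s)), card_univ,
      Fintype.card_fin]
    simp only [smul_eq_mul]
  refine ⟨hcard, ?_⟩
  rw [hcard, Nat.cast_sum, mul_sum]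
  refine sum_congr rfl fun j hj => ?_
  obtain ⟨hj1, hjm⟩ := mem_Icc.mp hj
  have hpow : (2 : ℝ) ^ ((m - j) * s) = 2 ^ ((m - 1) * s) * 2 ^ (-(((j - 1) * s : ℕ) : ℤ)) := by
    rw [zpow_neg, zpow_natCast, ← pow_sub₀ _ two_ne_zero (Nat.mul_le_mul_right s (by omega)),
      ← Nat.sub_mul]
    congr 2
    omega
  rw [Nat.cast_mul, Nat.cast_pow, Nat.cast_ofNat, hpow]
  ring

/-- In the block construction,
`|F| = Σ_{j=1}^{m} C(m,j) · 2^{(m−j)s} = 2^{(m−1)s} · Σ_{j=1}^{m} C(m,j) · 2^{−(j−1)s}`. -/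
theorem blockFamily_card
    (k m s : ℕ) (hk : 0 < k) (hm : 2 ≤ m) (hs : 0 < s) (hsk : s + 2 ≤ k)
    (B : Fin m → Finset (Fin (k * m)))
    (hBcard : ∀ i, (B i).card = k)
    (hBdisj : ∀ i j : Fin m, i ≠ j → Disjoint (B i) (B j))
    (hBcover : (Finset.univ : Finset (Fin m)).biUnion B = (Finset.univ : Finset (Fin (k * m))))
    (T : Fin m → Finset (Fin (k * m)))
    (hT : ∀ i, T i ⊆ B i) (hTcard : ∀ i, (T i).card = s)
    :
    (blockFamily B ((univ : Finset (Fin m)).biUnion T)).card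
        = ∑ j ∈ Finset.Icc 1 m, m.choose j * 2 ^ ((m - j) * s) ∧
      ((blockFamily B ((univ : Finset (Fin m)).biUnion T)).card : ℝ)
        = 2 ^ ((m - 1) * s) *
            ∑ j ∈ Finset.Icc 1 m, (m.choose j : ℝ) * (2 : ℝ) ^ (-(((j - 1) * s : ℕ) : ℤ)) :=
  blockFamily_card_general k m s hs hsk B hBcard hBdisj T hT hTcard
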